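/- arXiv:1407.4216 — 5 statements merged into one kernel-verified Lean document; each statement's English description precedes it below -/
import Mathlib

section
/- Let φ be a function holomorphic on the strip D(a,b) = {s : a < Re s < b}. Suppose φ is strongly universal in D(a,b), meaning: for every compact subset K of D(a,b) with connected complement, every function f continuous on K and holomorphic in the interior of K, and every ε > 0, the set of τ ∈ [0,T] with sup_{s∈K} |φ(s+iτ) − f(s)| < ε has positive lower density as T → ∞. Then for any σ₁, σ₂ with a < σ₁ < σ₂ < b, there exists a constant C > 0 such that the number N(T; σ₁, σ₂; φ) of zeros ρ of φ with σ₁ ≤ Re ρ ≤ σ₂ and 0 ≤ Im ρ ≤ T is at least C·T for all sufficiently large T. -/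
open Complex Filter MeasureTheory Set

/-- The lower density of a set of real numbers. -/
noncomputable def lowerDensity (S : Set ℝ) : ℝ :=
  Filter.liminf (fun T : ℝ => (MeasureTheory.volume (S ∩ Set.Icc 0 T)).toReal / T)
    Filter.atTop

/-- The number of zeros `ρ` of `φ` with `σ₁ ≤ Re ρ ≤ σ₂` and `0 ≤ Im ρ ≤ T`. -/
noncomputable def zeroCount (φ : ℂ → ℂ) (σ₁ σ₂ T : ℝ) : ℕ :=
  Set.ncard {ρ : ℂ | φ ρ = 0 ∧ σ₁ ≤ ρ.re ∧ ρ.re ≤ σ₂ ∧ 0 ≤ ρ.im ∧ ρ.im ≤ T}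

/-!
Put `σ₀ = (σ₁ + σ₂)/2` and `δ = (σ₂ - σ₁)/2`. Universality, applied to `s ↦ s - σ₀` on the disc
`|s - σ₀| ≤ δ` (whose complement is connected) with accuracy `δ/2`, gives a set `S` of positive
lower density of shifts `τ` for which `φ(· + iτ)` is uniformly within `δ/2` of `s - σ₀` on the
disc. By the minimum modulus principle each such `φ(· + iτ)` vanishes in the disc, so every
`τ ∈ S` lies within `δ` of the ordinate of a zero in the substrip. Hence `S ∩ [0, T]` is covered
by `N(T) + 2` intervals of length `2δ`, and `c T ≤ meas (S ∩ [0, T]) ≤ 2δ (N(T) + 2)` for large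
`T`. The zeros in each rectangle are finitely many because `φ` does not vanish identically.
-/

open Metric

theorem isConnected_compl_closedBall {E : Type*} [NormedAddCommGroup E] [NormedSpace ℝ E]
    (h : 1 < Module.rank ℝ E) (x : E) {r : ℝ} (hr : 0 ≤ r) :
    IsConnected (closedBall x r)ᶜ := by
  have himage : (fun p : E × ℝ => x + p.2 • p.1) '' (sphere 0 1 ×ˢ Ioi r) =
      (closedBall x r)ᶜ := by
    ext y
    simp only [mem_image, mem_prod, mem_sphere_zero_iff_norm, mem_Ioi, mem_compl_iff,
      mem_closedBall, dist_eq_norm, not_le, Prod.exists]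
    constructor
    · rintro ⟨u, t, ⟨hu, ht⟩, rfl⟩
      simpa [norm_smul, hu, abs_of_pos (hr.trans_lt ht)] using ht
    · intro hy
      have hy0 : 0 < ‖y - x‖ := hr.trans_lt hy
      refine ⟨‖y - x‖⁻¹ • (y - x), ‖y - x‖, ⟨?_, hy⟩, ?_⟩
      · rw [norm_smul, norm_inv, norm_norm, inv_mul_cancel₀ hy0.ne']
      · rw [smul_smul, mul_inv_cancel₀ hy0.ne', one_smul, add_sub_cancel]
  rw [← himage]
  exact ((isConnected_sphere h 0 zero_le_one).prod isConnected_Ioi).image _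
    (by fun_prop)

theorem exists_mem_closedBall_eq_zero_of_norm_sub_lt {g : ℂ → ℂ} {c : ℂ} {r : ℝ}
    (hr : 0 < r) (hg : DifferentiableOn ℂ g (closedBall c r))
    (hgc : ∀ s ∈ closedBall c r, ‖g s - (s - c)‖ < r / 2) :
    ∃ s ∈ closedBall c r, g s = 0 := by
  -- otherwise `1 / g` is holomorphic on the disc, at most `2 / r` on its boundary and larger
  -- than `2 / r` at its centre
  by_contra! hg0
  have hinv : DiffContOnCl ℂ (fun s => (g s)⁻¹) (ball c r) :=
    (hg.inv hg0).diffContOnCl_ball subset_rfl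
  have hsphere : ∀ z ∈ frontier (ball c r), ‖(g z)⁻¹‖ ≤ (r / 2)⁻¹ := by
    intro z hz
    rw [frontier_ball c hr.ne'] at hz
    have hzc : ‖z - c‖ = r := mem_sphere_iff_norm.1 hz
    have := hgc z (sphere_subset_closedBall hz)
    have hgz : r / 2 ≤ ‖g z‖ := by
      linarith [norm_sub_norm_le (z - c) (g z), norm_sub_rev (z - c) (g z)]
    rw [norm_inv]
    exact inv_anti₀ (half_pos hr) hgz
  have hcenter := Complex.norm_le_of_forall_mem_frontier_norm_le isBounded_ball hinv
    hsphere (subset_closure (mem_ball_self hr))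
  have := hgc c (mem_closedBall_self hr.le)
  rw [sub_self, sub_zero] at this
  rw [norm_inv] at hcenter
  exact (hcenter.trans_lt ((inv_lt_inv₀ (half_pos hr)
    (norm_pos_iff.2 (hg0 c (mem_closedBall_self hr.le)))).2 this)).false

theorem AnalyticOnNhd.finite_inter_preimage_zero_of_isCompact {f : ℂ → ℂ} {U K : Set ℂ}
    (hf : AnalyticOnNhd ℂ f U) (hU : IsPreconnected U) {z₀ : ℂ} (hz₀ : z₀ ∈ U)
    (hfz₀ : f z₀ ≠ 0) (hK : IsCompact K) (hKU : K ⊆ U) : (K ∩ {z | f z = 0}).Finite := by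
  have hcod := (hf.eqOn_zero_or_eventually_ne_zero_of_preconnected hU).resolve_left
    fun h => hfz₀ (h hz₀)
  simpa [sdiff_eq, compl_ofPred] using
    hK.finite_sdiff_of_mem_codiscreteWithin (codiscreteWithin_mono hKU hcod)

theorem nonempty_of_lowerDensity_pos {S : Set ℝ} (hS : 0 < lowerDensity S) : S.Nonempty := by
  contrapose! hS
  simp [lowerDensity, hS]

theorem eventually_mul_lt_volume_of_lt_lowerDensity {S : Set ℝ} {c : ℝ}
    (hc : c < lowerDensity S) : ∀ᶠ T in atTop, c * T < (volume (S ∩ Icc 0 T)).toReal := by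
  have hbdd : IsBoundedUnder (· ≥ ·) atTop
      (fun T : ℝ => (volume (S ∩ Icc 0 T)).toReal / T) :=
    ⟨0, eventually_map.2 <| (eventually_ge_atTop 0).mono fun T hT => by positivity⟩
  filter_upwards [eventually_lt_of_lt_liminf hc hbdd, eventually_gt_atTop 0] with T hT hT0
  exact (lt_div_iff₀ hT0).1 hT

theorem exists_pos_eventually_mul_le_of_lowerDensity_pos {S : Set ℝ} (hS : 0 < lowerDensity S)
    {N : ℝ → ℝ} {A B : ℝ} (hA : 0 < A)
    (hN : ∀ᶠ T in atTop, (volume (S ∩ Icc 0 T)).toReal ≤ A * (N T + B)) :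
    ∃ C : ℝ, 0 < C ∧ ∀ᶠ T in atTop, C * T ≤ N T := by
  set d := lowerDensity S
  refine ⟨d / (4 * A), by positivity, ?_⟩
  filter_upwards [hN, eventually_mul_lt_volume_of_lt_lowerDensity (half_lt_self hS),
    eventually_ge_atTop (4 * A * B / d)] with T hNT hdT hT
  have h1 : 4 * A * B ≤ d * T := by rwa [div_le_iff₀' hS] at hT
  rw [div_mul_eq_mul_div, div_le_iff₀ (by positivity)]
  nlinarith

theorem toReal_volume_le_of_forall_exists_dist_le {A : Set ℝ} (P : Finset ℝ) {r : ℝ}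
    (hr : 0 ≤ r) (hA : ∀ τ ∈ A, ∃ p ∈ P, dist τ p ≤ r) :
    (volume A).toReal ≤ 2 * r * P.card := by
  have hcover : A ⊆ ⋃ p ∈ P, closedBall p r := fun τ hτ => by
    simpa using hA τ hτ
  refine ENNReal.toReal_le_of_le_ofReal (by positivity) ?_
  calc volume A ≤ volume (⋃ p ∈ P, closedBall p r) := measure_mono hcover
    _ ≤ ∑ p ∈ P, volume (closedBall p r) := measure_biUnion_finset_le P _
    _ = ENNReal.ofReal (2 * r * P.card) := by
      simp [Real.volume_closedBall, mul_comm]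

theorem Complex.re_mem_Icc_of_mem_closedBall {z c : ℂ} {r : ℝ}
    (hz : z ∈ closedBall c r) :
    z.re ∈ Icc (c.re - r) (c.re + r) := by
  rw [← Real.closedBall_eq_Icc, mem_closedBall, Real.dist_eq, ← sub_re]
  exact (abs_re_le_norm _).trans (mem_closedBall_iff_norm.1 hz)

theorem Complex.im_mem_Icc_of_mem_closedBall {z c : ℂ} {r : ℝ}
    (hz : z ∈ closedBall c r) :
    z.im ∈ Icc (c.im - r) (c.im + r) := by
  rw [← Real.closedBall_eq_Icc, mem_closedBall, Real.dist_eq, ← sub_im]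
  exact (abs_im_le_norm _).trans (mem_closedBall_iff_norm.1 hz)

theorem exists_zero_near_of_norm_sub_lt {φ : ℂ → ℂ} {σ₀ δ τ : ℝ} (hδ : 0 < δ)
    (hφ : ∀ s ∈ closedBall (σ₀ : ℂ) δ, DifferentiableAt ℂ φ (s + τ * I))
    (hτ : ∀ s ∈ closedBall (σ₀ : ℂ) δ, ‖φ (s + τ * I) - (s - σ₀)‖ < δ / 2) :
    ∃ ρ, φ ρ = 0 ∧ ρ.re ∈ Icc (σ₀ - δ) (σ₀ + δ) ∧ ρ.im ∈ Icc (τ - δ) (τ + δ) := by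
  obtain ⟨s, hs, hs0⟩ := exists_mem_closedBall_eq_zero_of_norm_sub_lt hδ
    (fun s hs => ((hφ s hs).comp s (by fun_prop)).differentiableWithinAt) hτ
  have hre := re_mem_Icc_of_mem_closedBall hs
  have him := im_mem_Icc_of_mem_closedBall hs
  simp only [ofReal_re, ofReal_im, zero_sub, zero_add, mem_Icc] at hre him
  exact ⟨s + τ * I, hs0, by simpa using hre, by simp; constructor <;> linarith⟩

def zerosInRect (φ : ℂ → ℂ) (σ₁ σ₂ T : ℝ) : Set ℂ :=
  {ρ : ℂ | φ ρ = 0 ∧ σ₁ ≤ ρ.re ∧ ρ.re ≤ σ₂ ∧ 0 ≤ ρ.im ∧ ρ.im ≤ T}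

theorem finite_zerosInRect {φ : ℂ → ℂ} {U : Set ℂ} {σ₁ σ₂ T : ℝ}
    (hφ : DifferentiableOn ℂ φ U) (hUo : IsOpen U) (hUc : IsPreconnected U)
    (hne : ∃ z ∈ U, φ z ≠ 0) (hU : Icc σ₁ σ₂ ×ℂ Icc 0 T ⊆ U) :
    (zerosInRect φ σ₁ σ₂ T).Finite := by
  obtain ⟨z₀, hz₀U, hz₀⟩ := hne
  refine ((hφ.analyticOnNhd hUo).finite_inter_preimage_zero_of_isCompact hUc hz₀U hz₀
    (isCompact_Icc.reProdIm isCompact_Icc) hU).subset ?_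
  rintro ρ ⟨h0, hl, hr, hb, ht⟩
  exact ⟨⟨⟨hl, hr⟩, hb, ht⟩, h0⟩

theorem toReal_volume_inter_Icc_le_zeroCount {φ : ℂ → ℂ} {S : Set ℝ} {σ₁ σ₂ δ T : ℝ}
    (hδ : 0 ≤ δ) (hfin : (zerosInRect φ σ₁ σ₂ T).Finite)
    (hS : ∀ τ ∈ S, ∃ ρ, φ ρ = 0 ∧ ρ.re ∈ Icc σ₁ σ₂ ∧ ρ.im ∈ Icc (τ - δ) (τ + δ)) :
    (volume (S ∩ Icc 0 T)).toReal ≤ 2 * δ * (zeroCount φ σ₁ σ₂ T + 2) := by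
  set P := insert 0 (insert T (hfin.toFinset.image im))
  have hcount : zeroCount φ σ₁ σ₂ T = hfin.toFinset.card :=
    Set.ncard_eq_toFinset_card _ hfin
  have hP : P.card ≤ zeroCount φ σ₁ σ₂ T + 2 := by
    linarith [Finset.card_insert_le 0 (insert T (hfin.toFinset.image im)),
      Finset.card_insert_le T (hfin.toFinset.image im), hfin.toFinset.card_image_le (f := im)]
  calc (volume (S ∩ Icc 0 T)).toReal ≤ 2 * δ * P.card :=
        toReal_volume_le_of_forall_exists_dist_le P hδ ?_
    _ ≤ 2 * δ * (zeroCount φ σ₁ σ₂ T + 2) := by gcongr; exact_mod_cast hP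
  rintro τ ⟨hτS, hτ0, hτT⟩
  obtain ⟨ρ, hρ, ⟨hl, hr⟩, hb, ht⟩ := hS τ hτS
  -- the zero found from `τ ∈ [0, T]` leaves the rectangle only if `τ` is `δ`-close to `0` or `T`
  by_cases hρb : ρ.im < 0
  · exact ⟨0, by simp [P], by rw [Real.dist_eq, abs_le]; constructor <;> linarith⟩
  by_cases hρt : T < ρ.im
  · exact ⟨T, by simp [P], by rw [Real.dist_eq, abs_le]; constructor <;> linarith⟩
  refine ⟨ρ.im, ?_, by rw [Real.dist_eq, abs_le]; constructor <;> linarith⟩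
  simp only [P, Finset.mem_insert, Finset.mem_image, Set.Finite.mem_toFinset]
  exact Or.inr (Or.inr ⟨ρ, ⟨hρ, hl, hr, not_lt.1 hρb, not_lt.1 hρt⟩, rfl⟩)

theorem zeroCount_lower_bound_of_strongly_universal_general (a b : ℝ) (φ : ℂ → ℂ)
    (hφ : DifferentiableOn ℂ φ {s : ℂ | a < s.re ∧ s.re < b})
    (hsu : ∀ K : Set ℂ, IsCompact K → K ⊆ {s : ℂ | a < s.re ∧ s.re < b} →
      IsConnected Kᶜ → ∀ f : ℂ → ℂ, ContinuousOn f K →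
      DifferentiableOn ℂ f (interior K) → ∀ ε : ℝ, 0 < ε →
      0 < lowerDensity {τ : ℝ | ∀ s ∈ K, ‖φ (s + τ * Complex.I) - f s‖ < ε})
    (σ₁ σ₂ : ℝ) (h1 : a < σ₁) (h12 : σ₁ < σ₂) (h2 : σ₂ < b) :
    ∃ C : ℝ, 0 < C ∧ ∀ᶠ T in atTop, C * T ≤ (zeroCount φ σ₁ σ₂ T : ℝ) := by
  set U : Set ℂ := {s : ℂ | a < s.re ∧ s.re < b}
  have hUo : IsOpen U := isOpen_Ioo.preimage continuous_re
  have hUc : IsPreconnected U := ((convex_Ioo a b).linear_preimage reLm).isPreconnected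
  obtain ⟨σ₀, δ, hδ, rfl, rfl⟩ : ∃ σ₀ δ : ℝ, 0 < δ ∧ σ₀ - δ = σ₁ ∧ σ₀ + δ = σ₂ :=
    ⟨(σ₁ + σ₂) / 2, (σ₂ - σ₁) / 2, by linarith, by ring, by ring⟩
  have hshift : ∀ τ : ℝ, ∀ s ∈ closedBall (σ₀ : ℂ) δ, s + τ * I ∈ U := fun τ s hs => by
    obtain ⟨hl, hr⟩ := re_mem_Icc_of_mem_closedBall hs
    exact ⟨by simp at hl ⊢; linarith, by simp at hr ⊢; linarith⟩
  have hS := hsu _ (isCompact_closedBall _ _) (fun s hs => by simpa using hshift 0 s hs)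
    (isConnected_compl_closedBall (by simp) _ hδ.le) (fun s => s - σ₀) (by fun_prop)
    (by fun_prop) _ (half_pos hδ)
  have hne : ∃ z ∈ U, φ z ≠ 0 := by
    obtain ⟨τ, hτ⟩ := nonempty_of_lowerDensity_pos hS
    have hmem : (σ₀ + δ : ℂ) ∈ closedBall (σ₀ : ℂ) δ := by simp [abs_of_pos hδ]
    refine ⟨_, hshift τ _ hmem, fun h => ?_⟩
    simpa [h, abs_of_pos hδ] using (hτ _ hmem).trans (half_lt_self hδ)
  refine exists_pos_eventually_mul_le_of_lowerDensity_pos hS (by positivity : 0 < 2 * δ)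
    (Eventually.of_forall fun T => toReal_volume_inter_Icc_le_zeroCount hδ.le
      (finite_zerosInRect hφ hUo hUc hne fun ρ hρ =>
        ⟨h1.trans_le hρ.1.1, hρ.1.2.trans_lt h2⟩)
      fun τ hτ => exists_zero_near_of_norm_sub_lt hδ
        (fun s hs => hφ.differentiableAt (hUo.mem_nhds (hshift τ s hs))) hτ)

/-- Strong universality of a function holomorphic in the strip `D(a,b)` implies a
linear lower bound for the number of its zeros in any closed substrip. -/
theorem zeroCount_lower_bound_of_strongly_universal (a b : ℝ) (hab : a < b) (φ : ℂ → ℂ)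
    (hφ : DifferentiableOn ℂ φ {s : ℂ | a < s.re ∧ s.re < b})
    (hsu : ∀ K : Set ℂ, IsCompact K → K ⊆ {s : ℂ | a < s.re ∧ s.re < b} →
      IsConnected Kᶜ → ∀ f : ℂ → ℂ, ContinuousOn f K →
      DifferentiableOn ℂ f (interior K) → ∀ ε : ℝ, 0 < ε →
      0 < lowerDensity {τ : ℝ | ∀ s ∈ K, ‖φ (s + τ * Complex.I) - f s‖ < ε})
    (σ₁ σ₂ : ℝ) (h1 : a < σ₁) (h12 : σ₁ < σ₂) (h2 : σ₂ < b) :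
    ∃ C : ℝ, 0 < C ∧ ∀ᶠ T in atTop, C * T ≤ (zeroCount φ σ₁ σ₂ T : ℝ) :=
  zeroCount_lower_bound_of_strongly_universal_general a b φ hφ hsu σ₁ σ₂ h1 h12 h2
end

section
/- The function 1/(2^s − 1) is not universal in any strip D(a,b) ⊂ {Re s > 0}: there exist a compact set K ⊂ D(a,b) with connected complement, a non-vanishing continuous function f on K holomorphic in the interior, and ε > 0 such that no real τ satisfies sup_{s∈K} |1/(2^{s+iτ} − 1) − f(s)| < ε. -/
open Complex

/-! On a vertical line `Re s = c > 0` the modulus of `2 ^ s - 1` is at least `2 ^ c - 1 > 0`, so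
`1 / (2 ^ s - 1)` is bounded by `1 / (2 ^ c - 1)` uniformly in the vertical shift. Hence no shift
comes within `1` of the constant `1 / (2 ^ c - 1) + 1` at the point `c`, and `K = {c}` already
witnesses non-universality. -/

theorem norm_ofReal_cpow_sub_one_ge {x : ℝ} (hx : 0 < x) (s : ℂ) :
    x ^ s.re - 1 ≤ ‖(x : ℂ) ^ s - 1‖ := by
  calc x ^ s.re - 1 = ‖(x : ℂ) ^ s‖ - ‖(1 : ℂ)‖ := by
        rw [norm_cpow_eq_rpow_re_of_pos hx, norm_one]
    _ ≤ ‖(x : ℂ) ^ s - 1‖ := norm_sub_norm_le _ _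

theorem norm_one_div_ofReal_cpow_sub_one_le {x : ℝ} (hx : 1 < x) {s : ℂ} (hs : 0 < s.re) :
    ‖1 / ((x : ℂ) ^ s - 1)‖ ≤ 1 / (x ^ s.re - 1) := by
  have hpos : 0 < x ^ s.re - 1 := sub_pos.2 (Real.one_lt_rpow hx hs)
  rw [norm_div, norm_one]
  exact one_div_le_one_div_of_le hpos (norm_ofReal_cpow_sub_one_ge (by linarith) s)

/-- The function `1/(2^s - 1)` is not universal in any strip `D(a,b) ⊆ {Re s > 0}`:
there is a compact set `K` with connected complement inside the strip, a non-vanishing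
admissible target function `f`, and an `ε > 0` such that no vertical shift approximates
`f` within `ε` on `K`. -/
theorem one_div_two_pow_sub_one_not_universal (a b : ℝ) (ha : 0 ≤ a) (hab : a < b) :
    ∃ K : Set ℂ, IsCompact K ∧ K ⊆ {s : ℂ | a < s.re ∧ s.re < b} ∧ IsConnected Kᶜ ∧
      ∃ f : ℂ → ℂ, ContinuousOn f K ∧ DifferentiableOn ℂ f (interior K) ∧
        (∀ s ∈ K, f s ≠ 0) ∧
        ∃ ε : ℝ, 0 < ε ∧ ∀ τ : ℝ, ∃ s ∈ K,
          ε ≤ ‖1 / ((2 : ℂ) ^ (s + τ * Complex.I) - 1) - f s‖ := by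
  obtain ⟨c, hac, hcb⟩ := exists_between hab
  have hc : 0 < c := ha.trans_lt hac
  obtain ⟨B, hB_def⟩ : ∃ B : ℝ, B = 1 / (2 ^ c - 1) := ⟨_, rfl⟩
  have hB : 0 < B := hB_def ▸ one_div_pos.2 (sub_pos.2 (Real.one_lt_rpow one_lt_two hc))
  refine ⟨{(c : ℂ)}, isCompact_singleton, by simp [hac, hcb],
    isConnected_compl_singleton_of_one_lt_rank (by simp) _, fun _ => ((B + 1 : ℝ) : ℂ),
    continuousOn_const, differentiableOn_const _, fun _ _ => ofReal_ne_zero.2 (by linarith),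
    1, one_pos, fun τ => ⟨c, rfl, ?_⟩⟩
  have hbound : ‖1 / ((2 : ℂ) ^ ((c : ℂ) + τ * I) - 1)‖ ≤ B := by
    simpa [hB_def] using
      norm_one_div_ofReal_cpow_sub_one_le one_lt_two (s := (c : ℂ) + τ * I) (by simpa)
  calc (1 : ℝ) ≤ ‖((B + 1 : ℝ) : ℂ)‖ - ‖1 / ((2 : ℂ) ^ ((c : ℂ) + τ * I) - 1)‖ := by
        rw [norm_real, Real.norm_of_nonneg (by linarith)]
        linarith
    _ ≤ ‖1 / ((2 : ℂ) ^ ((c : ℂ) + τ * I) - 1) - ((B + 1 : ℝ) : ℂ)‖ := by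
        rw [norm_sub_rev]
        exact norm_sub_norm_le _ _
end

section
/- Shifts universality principle: Let φ be holomorphic on D(σ₁,σ₂) = {s : σ₁ < Re s < σ₂} and universal there. Let K be a compact subset of D(σ₁,σ₂) with connected complement, let λ₁,...,λ_r be complex numbers such that the translates K_j = {s + λ_j : s ∈ K} are pairwise disjoint subsets of D(σ₁,σ₂), and suppose the union K₁ ∪ ... ∪ K_r has connected complement. Then the functions φ_j(s) = φ(s + λ_j), 1 ≤ j ≤ r, are jointly universal on K: for all non-vanishing f_j ∈ H^c(K) (continuous on K, holomorphic in the interior) and every ε > 0, the set of τ ∈ [0,T] with sup_{s∈K} |φ_j(s+iτ) − f_j(s)| < ε simultaneously for all j has positive lower density. -/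
/-!
Apply the universality of `φ` on the union `⋃ⱼ (K + λⱼ)` to the function equal to
`fⱼ(· - λⱼ)` on `K + λⱼ`. The translates are finitely many pairwise disjoint compact sets, so
each of them is relatively open in the union; hence the glued function is continuous on the
union, holomorphic on its interior and non-vanishing, and approximating it on the union is the
same as approximating every `fⱼ` on `K` by `φ(· + λⱼ + iτ)`.
-/

open Complex Filter MeasureTheory Set
open Topology

section Glue

open Function

variable {ι X Y : Type*} {A : ι → Set X}

noncomputable def glue (A : ι → Set X) (g : ι → X → Y) (d : Y) (z : X) : Y :=
  open Classical in if h : ∃ i, z ∈ A i then g h.choose z else d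

theorem glue_eq_of_mem (hd : Pairwise (Disjoint on A)) (g : ι → X → Y) (d : Y) {i : ι} {z : X}
    (hz : z ∈ A i) : glue A g d z = g i z := by
  have h : ∃ i, z ∈ A i := ⟨i, hz⟩
  have hi : h.choose = i := by
    by_contra hne
    exact Set.disjoint_left.mp (hd hne) h.choose_spec hz
  simp only [glue, dif_pos h, hi]

theorem exists_isOpen_inter_iUnion_subset [TopologicalSpace X] [Finite ι]
    (hA : ∀ i, IsClosed (A i)) (hd : Pairwise (Disjoint on A)) (i : ι) :
    ∃ V, IsOpen V ∧ A i ⊆ V ∧ V ∩ ⋃ j, A j ⊆ A i := by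
  refine ⟨(⋃ j ∈ ({i}ᶜ : Set ι), A j)ᶜ,
    ((Set.toFinite _).isClosed_biUnion fun j _ => hA j).isOpen_compl, ?_, ?_⟩
  · simp only [subset_compl_iff_disjoint_right, disjoint_iUnion_right]
    exact fun j hj => hd (Ne.symm hj)
  · rintro z ⟨hzV, hz⟩
    obtain ⟨j, hzj⟩ := mem_iUnion.mp hz
    by_cases hji : j = i
    · exact hji ▸ hzj
    · exact absurd (mem_biUnion (s := ({i}ᶜ : Set ι)) hji hzj) hzV

theorem mem_nhdsWithin_iUnion_of_mem [TopologicalSpace X] [Finite ι]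
    (hA : ∀ i, IsClosed (A i)) (hd : Pairwise (Disjoint on A)) {i : ι} {z : X} (hz : z ∈ A i) :
    A i ∈ 𝓝[⋃ j, A j] z := by
  obtain ⟨V, hV, hAV, hVA⟩ := exists_isOpen_inter_iUnion_subset hA hd i
  exact mem_nhdsWithin.mpr ⟨V, hV, hAV hz, hVA⟩

theorem continuousOn_glue [TopologicalSpace X] [TopologicalSpace Y] [Finite ι]
    (hA : ∀ i, IsClosed (A i)) (hd : Pairwise (Disjoint on A)) {g : ι → X → Y}
    (hg : ∀ i, ContinuousOn (g i) (A i)) (d : Y) :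
    ContinuousOn (glue A g d) (⋃ i, A i) := by
  intro z hz
  obtain ⟨i, hzi⟩ := mem_iUnion.mp hz
  have hAi := mem_nhdsWithin_iUnion_of_mem hA hd hzi
  exact ((hg i z hzi).mono_of_mem_nhdsWithin hAi).congr_of_eventuallyEq
    (eventually_of_mem hAi fun w hw => glue_eq_of_mem hd g d hw) (glue_eq_of_mem hd g d hzi)

theorem differentiableOn_glue {𝕜 E F : Type*} [NontriviallyNormedField 𝕜]
    [NormedAddCommGroup E] [NormedSpace 𝕜 E] [NormedAddCommGroup F] [NormedSpace 𝕜 F]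
    [Finite ι] {A : ι → Set E} (hA : ∀ i, IsClosed (A i)) (hd : Pairwise (Disjoint on A))
    {g : ι → E → F} (hg : ∀ i, DifferentiableOn 𝕜 (g i) (interior (A i))) (d : F) :
    DifferentiableOn 𝕜 (glue A g d) (interior (⋃ i, A i)) := by
  intro z hz
  obtain ⟨i, hzi⟩ := mem_iUnion.mp (interior_subset hz)
  have hAi : A i ∈ 𝓝 z := by
    simpa only [nhdsWithin_eq_nhds.mpr (mem_interior_iff_mem_nhds.mp hz)]
      using mem_nhdsWithin_iUnion_of_mem hA hd hzi
  have hzAi : z ∈ interior (A i) := mem_interior_iff_mem_nhds.mpr hAi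
  exact (((hg i z hzAi).differentiableAt (isOpen_interior.mem_nhds hzAi)).congr_of_eventuallyEq
    (eventually_of_mem hAi fun w hw => glue_eq_of_mem hd g d hw)).differentiableWithinAt

end Glue

theorem ContinuousOn.comp_sub_const_image_add {G Y : Type*} [TopologicalSpace G] [AddGroup G]
    [ContinuousSub G] [TopologicalSpace Y] {f : G → Y} {K : Set G} (hf : ContinuousOn f K)
    (c : G) : ContinuousOn (fun z => f (z - c)) ((· + c) '' K) :=
  hf.comp (continuous_sub_right c).continuousOn (by rintro _ ⟨s, hs, rfl⟩; simpa using hs)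

theorem DifferentiableOn.comp_sub_const_interior_image_add {𝕜 E F : Type*}
    [NontriviallyNormedField 𝕜] [NormedAddCommGroup E] [NormedSpace 𝕜 E] [NormedAddCommGroup F]
    [NormedSpace 𝕜 F] {f : E → F} {K : Set E} (hf : DifferentiableOn 𝕜 f (interior K)) (c : E) :
    DifferentiableOn 𝕜 (fun z => f (z - c)) (interior ((· + c) '' K)) := by
  change DifferentiableOn 𝕜 _ (interior (Homeomorph.addRight c '' K))
  rw [← (Homeomorph.addRight c).image_interior]
  exact hf.comp (differentiableOn_id.sub_const c) (by rintro _ ⟨s, hs, rfl⟩; simpa using hs)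

theorem shifts_universality_principle_general (σ₁ σ₂ : ℝ) (φ : ℂ → ℂ)
    (hu : ∀ K : Set ℂ, IsCompact K → K ⊆ {s : ℂ | σ₁ < s.re ∧ s.re < σ₂} →
      IsConnected Kᶜ → ∀ f : ℂ → ℂ, ContinuousOn f K →
      DifferentiableOn ℂ f (interior K) → (∀ s ∈ K, f s ≠ 0) → ∀ ε : ℝ, 0 < ε →
      0 < lowerDensity {τ : ℝ | ∀ s ∈ K, ‖φ (s + τ * Complex.I) - f s‖ < ε})
    (K : Set ℂ) (hK : IsCompact K)
    (r : ℕ) (lam : Fin r → ℂ)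
    (hsub : ∀ j : Fin r, (fun s => s + lam j) '' K ⊆ {s : ℂ | σ₁ < s.re ∧ s.re < σ₂})
    (hdisj : ∀ i j : Fin r, i ≠ j →
      Disjoint ((fun s => s + lam i) '' K) ((fun s => s + lam j) '' K))
    (hUc : IsConnected (⋃ j : Fin r, (fun s => s + lam j) '' K)ᶜ)
    (f : Fin r → ℂ → ℂ) (hfc : ∀ j, ContinuousOn (f j) K)
    (hfd : ∀ j, DifferentiableOn ℂ (f j) (interior K))
    (hfnv : ∀ j, ∀ s ∈ K, f j s ≠ 0) (ε : ℝ) (hε : 0 < ε) :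
    0 < lowerDensity {τ : ℝ | ∀ j : Fin r, ∀ s ∈ K,
      ‖φ (s + lam j + τ * Complex.I) - f j s‖ < ε} := by
  set A : Fin r → Set ℂ := fun j => (fun s => s + lam j) '' K
  have hA : ∀ j, IsCompact (A j) := fun j => hK.image (continuous_add_const (lam j))
  have hAd : Pairwise (Function.onFun Disjoint A) := hdisj
  set g := glue A (fun j z => f j (z - lam j)) 1
  have hg : ∀ j, ∀ s ∈ K, g (s + lam j) = f j s := fun j s hs =>
    (glue_eq_of_mem hAd _ 1 (mem_image_of_mem (· + lam j) hs)).trans (by simp)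
  have hU (p : ℂ → Prop) : (∀ z ∈ ⋃ j, A j, p z) ↔ ∀ j, ∀ s ∈ K, p (s + lam j) := by
    simp only [A, mem_iUnion, forall_exists_index, forall_comm (α := ℂ), forall_mem_image]
  have hclosed := fun j => (hA j).isClosed
  have key := hu (⋃ j, A j) (isCompact_iUnion hA) (iUnion_subset hsub) hUc g
    (continuousOn_glue hclosed hAd (fun j => (hfc j).comp_sub_const_image_add (lam j)) 1)
    (differentiableOn_glue hclosed hAd
      (fun j => (hfd j).comp_sub_const_interior_image_add (lam j)) 1)
    ((hU _).mpr fun j s hs => hg j s hs ▸ hfnv j s hs) ε hε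
  simpa +contextual only [hU, hg] using key

/-- Shifts universality principle (Kaczorowski–Laurinčikas–Steuding): if `φ` is
universal in the strip `D(σ₁,σ₂)` and the translates `K + λⱼ` of a compact set `K`
with connected complement are pairwise disjoint subsets of the strip whose union has
connected complement, then the shifts `φ(· + λⱼ)` are jointly universal on `K`. -/
theorem shifts_universality_principle (σ₁ σ₂ : ℝ) (hσ : σ₁ < σ₂) (φ : ℂ → ℂ)
    (hφ : DifferentiableOn ℂ φ {s : ℂ | σ₁ < s.re ∧ s.re < σ₂})
    (hu : ∀ K : Set ℂ, IsCompact K → K ⊆ {s : ℂ | σ₁ < s.re ∧ s.re < σ₂} →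
      IsConnected Kᶜ → ∀ f : ℂ → ℂ, ContinuousOn f K →
      DifferentiableOn ℂ f (interior K) → (∀ s ∈ K, f s ≠ 0) → ∀ ε : ℝ, 0 < ε →
      0 < lowerDensity {τ : ℝ | ∀ s ∈ K, ‖φ (s + τ * Complex.I) - f s‖ < ε})
    (K : Set ℂ) (hK : IsCompact K) (hKc : IsConnected Kᶜ)
    (r : ℕ) (lam : Fin r → ℂ)
    (hsub : ∀ j : Fin r, (fun s => s + lam j) '' K ⊆ {s : ℂ | σ₁ < s.re ∧ s.re < σ₂})
    (hdisj : ∀ i j : Fin r, i ≠ j →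
      Disjoint ((fun s => s + lam i) '' K) ((fun s => s + lam j) '' K))
    (hUc : IsConnected (⋃ j : Fin r, (fun s => s + lam j) '' K)ᶜ)
    (f : Fin r → ℂ → ℂ) (hfc : ∀ j, ContinuousOn (f j) K)
    (hfd : ∀ j, DifferentiableOn ℂ (f j) (interior K))
    (hfnv : ∀ j, ∀ s ∈ K, f j s ≠ 0) (ε : ℝ) (hε : 0 < ε) :
    0 < lowerDensity {τ : ℝ | ∀ j : Fin r, ∀ s ∈ K,
      ‖φ (s + lam j + τ * Complex.I) - f j s‖ < ε} :=
  shifts_universality_principle_general σ₁ σ₂ φ hu K hK r lam hsub hdisj hUc f hfc hfd hfnv ε hε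
end

section
/- Kronecker–Weyl theorem: If α₁,...,α_m are real numbers linearly independent over ℚ, then for any real numbers θ₁,...,θ_m and any ε > 0, the set of τ ∈ [0,T] with ‖τα_k − θ_k‖ < ε for all 1 ≤ k ≤ m (where ‖x‖ denotes the distance from x to the nearest integer) has positive density, i.e., lim_{T→∞} (1/T) meas{τ ∈ [0,T] : ‖τα_k − θ_k‖ < ε, 1 ≤ k ≤ m} > 0. -/
open Filter MeasureTheory

/-- The distance from a real number to the nearest integer. -/
noncomputable def distNearestInt (x : ℝ) : ℝ := |x - round x|

/-!
The flow `τ ↦ (τ αₖ - θₖ)ₖ` on the torus `(ℝ/ℤ)ᵐ` is equidistributed. By Stone–Weierstrass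
the characters `x ↦ e(n·x)` span a dense subspace of `C((ℝ/ℤ)ᵐ, ℂ)`, and along the flow `e(n·x)`
is a constant times `τ ↦ e(τ n·α)`, whose time average tends to `0` unless `n·α = 0`, i.e. unless
`n = 0`. So the laws of the flow on `[0, T]` converge weakly to Haar measure, and by the
portmanteau theorem the proportion of time spent in the open box of radius `ε`, whose boundary is
Haar-null, tends to its Haar measure, which is positive.
-/

open Set Metric Topology Complex Real

theorem frontier_univ_pi_subset {ι : Type*} {X : ι → Type*} [∀ i, TopologicalSpace (X i)]
    [Finite ι] (s : ∀ i, Set (X i)) :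
    frontier (univ.pi s) ⊆ ⋃ i, Function.eval i ⁻¹' frontier (s i) := by
  rintro x ⟨hx_closure, hx_interior⟩
  rw [closure_pi_set, mem_univ_pi] at hx_closure
  rw [interior_pi_set finite_univ, mem_univ_pi, not_forall] at hx_interior
  obtain ⟨i, hi⟩ := hx_interior
  exact mem_iUnion.2 ⟨i, hx_closure i, hi⟩

theorem ContinuousMap.integrable_of_compactSpace {X E : Type*} [TopologicalSpace X]
    [CompactSpace X] [MeasurableSpace X] [OpensMeasurableSpace X] [NormedAddCommGroup E]
    (μ : Measure X) [IsFiniteMeasure μ] (f : C(X, E)) : Integrable f μ :=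
  f.continuous.integrable_of_hasCompactSupport (.of_compactSpace _)

namespace MeasureTheory.ProbabilityMeasure

variable {X ι : Type*} [TopologicalSpace X] [CompactSpace X] [MeasurableSpace X]
  [OpensMeasurableSpace X]

theorem lipschitzWith_integral_continuousMap (μ : ProbabilityMeasure X) :
    LipschitzWith 1 fun f : C(X, ℂ) => ∫ x, f x ∂(μ : Measure X) := by
  refine LipschitzWith.of_dist_le_mul fun f g => ?_
  rw [dist_eq_norm, dist_eq_norm, NNReal.coe_one, one_mul,
    ← integral_sub (f.integrable_of_compactSpace _) (g.integrable_of_compactSpace _)]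
  simpa using norm_integral_le_of_norm_le_const (μ := (μ : Measure X))
    (Eventually.of_forall fun x => (f - g).norm_coe_le_norm x)

def tendstoIntegralSubmodule (μs : ι → ProbabilityMeasure X) (L : Filter ι)
    (μ : ProbabilityMeasure X) : Submodule ℂ C(X, ℂ) where
  carrier :=
    {f | Tendsto (fun i => ∫ x, f x ∂(μs i : Measure X)) L (𝓝 (∫ x, f x ∂(μ : Measure X)))}
  zero_mem' := by simpa using tendsto_const_nhds
  add_mem' {f g} hf hg := by
    simpa [integral_add (f.integrable_of_compactSpace _) (g.integrable_of_compactSpace _)]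
      using hf.add hg
  smul_mem' c f hf := by simpa [integral_const_mul] using hf.const_mul c

theorem isClosed_tendstoIntegralSubmodule (μs : ι → ProbabilityMeasure X) (L : Filter ι)
    (μ : ProbabilityMeasure X) : IsClosed (tendstoIntegralSubmodule μs L μ : Set C(X, ℂ)) :=
  (LipschitzWith.uniformEquicontinuous _ 1 fun i =>
      lipschitzWith_integral_continuousMap (μs i)).equicontinuous.isClosed_setOfPred_tendsto
    (lipschitzWith_integral_continuousMap μ).continuous

theorem tendsto_of_forall_integral_tendsto_of_dense_span {μs : ι → ProbabilityMeasure X}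
    {L : Filter ι} {μ : ProbabilityMeasure X} {s : Set C(X, ℂ)}
    (hs : (Submodule.span ℂ s).topologicalClosure = ⊤)
    (h : ∀ f ∈ s,
      Tendsto (fun i => ∫ x, f x ∂(μs i : Measure X)) L (𝓝 (∫ x, f x ∂(μ : Measure X)))) :
    Tendsto μs L (𝓝 μ) := by
  have hspan : Submodule.span ℂ s ≤ tendstoIntegralSubmodule μs L μ := Submodule.span_le.2 h
  have htop : ⊤ ≤ tendstoIntegralSubmodule μs L μ :=
    hs ▸ Submodule.topologicalClosure_minimal _ hspan (isClosed_tendstoIntegralSubmodule μs L μ)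
  refine (tendsto_iff_forall_integral_rclike_tendsto ℂ).2 fun f => ?_
  exact htop (Submodule.mem_top (x := (f : C(X, ℂ))))

end MeasureTheory.ProbabilityMeasure

section OccupationMeasure

open scoped ProbabilityTheory

variable {X : Type*} [MeasurableSpace X] {γ : ℝ → X}

noncomputable def occupationMeasure (hγ : Measurable γ) (T : Ioi (0 : ℝ)) :
    ProbabilityMeasure X :=
  have hT : (0 : ℝ) < T := T.2
  have : IsProbabilityMeasure (volume[|Icc (0 : ℝ) T]) :=
    ProbabilityTheory.cond_isProbabilityMeasure_of_finite (by simp [hT]) measure_Icc_lt_top.ne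
  ⟨(volume[|Icc (0 : ℝ) T]).map γ, Measure.isProbabilityMeasure_map hγ.aemeasurable⟩

theorem occupationMeasure_apply (hγ : Measurable γ) (T : Ioi (0 : ℝ)) {s : Set X}
    (hs : MeasurableSet s) :
    ((occupationMeasure hγ T : Measure X) s).toReal = (volume (γ ⁻¹' s ∩ Icc 0 T)).toReal / T := by
  have hT : (0 : ℝ) < T := T.2
  simp only [occupationMeasure, ProbabilityMeasure.coe_mk, Measure.map_apply hγ hs,
    ProbabilityTheory.cond_apply measurableSet_Icc, Real.volume_Icc, ENNReal.toReal_mul,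
    ENNReal.toReal_inv, ENNReal.toReal_ofReal hT.le, sub_zero, inter_comm, div_eq_inv_mul]

theorem integral_occupationMeasure {E : Type*} [NormedAddCommGroup E] [NormedSpace ℝ E]
    (hγ : Measurable γ) (T : Ioi (0 : ℝ)) {f : X → E} (hf : StronglyMeasurable f) :
    ∫ x, f x ∂(occupationMeasure hγ T : Measure X) = (T : ℝ)⁻¹ • ∫ τ in 0..T, f (γ τ) := by
  have hT : (0 : ℝ) < T := T.2
  rw [occupationMeasure, ProbabilityMeasure.coe_mk,
    integral_map hγ.aemeasurable hf.aestronglyMeasurable, ProbabilityTheory.cond,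
    integral_smul_measure, integral_Icc_eq_integral_Ioc,
    ← intervalIntegral.integral_of_le hT.le, Real.volume_Icc, sub_zero, ENNReal.toReal_inv,
    ENNReal.toReal_ofReal hT.le]

end OccupationMeasure

theorem tendsto_inv_smul_integral_cexp_mul_I {c : ℝ} (hc : c ≠ 0) :
    Tendsto (fun T : ℝ => T⁻¹ • ∫ τ in 0..T, cexp (c * I * τ)) atTop (𝓝 0) := by
  have hcI : (c : ℂ) * I ≠ 0 := mul_ne_zero (ofReal_ne_zero.2 hc) I_ne_zero
  refine tendsto_inv_atTop_zero.zero_smul_isBoundedUnder_le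
    ⟨2 / ‖(c : ℂ) * I‖, eventually_map.2 (Eventually.of_forall fun T => ?_)⟩
  have hexp : ‖cexp (c * I * T)‖ = 1 := by
    rw [mul_right_comm, ← ofReal_mul, norm_exp_ofReal_mul_I]
  rw [Function.comp_apply, integral_exp_mul_complex hcI, norm_div]
  gcongr
  calc ‖cexp (c * I * T) - cexp (c * I * (0 : ℝ))‖
      ≤ ‖cexp (c * I * T)‖ + ‖cexp (c * I * (0 : ℝ))‖ := norm_sub_le _ _
    _ = 2 := by rw [hexp, ofReal_zero, mul_zero, Complex.exp_zero, norm_one]; norm_num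

instance : IsProbabilityMeasure (volume : Measure UnitAddCircle) := ⟨UnitAddCircle.measure_univ⟩

instance : NullSingletonClass (volume : Measure UnitAddCircle) :=
  ⟨fun x => by simp [← closedBall_zero, AddCircle.volume_closedBall]⟩

theorem UnitAddCircle.sphere_zero_subset (r : ℝ) :
    sphere (0 : UnitAddCircle) r ⊆ {(r : UnitAddCircle), ((-r : ℝ) : UnitAddCircle)} := by
  intro x hx
  induction x using QuotientAddGroup.induction_on with | H y => ?_
  rw [mem_sphere_zero_iff_norm, UnitAddCircle.norm_eq] at hx
  have hy : ((y : ℝ) : UnitAddCircle) = ((y - round y : ℝ) : UnitAddCircle) := by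
    rw [AddCircle.coe_sub, eq_comm, sub_eq_self, AddCircle.coe_eq_zero_iff]
    exact ⟨round y, by simp⟩
  rcases eq_or_eq_neg_of_abs_eq hx with h | h <;> simp [hy, h]

theorem UnitAddCircle.volume_frontier_ball_zero (r : ℝ) :
    volume (frontier (ball (0 : UnitAddCircle) r)) = 0 :=
  measure_mono_null (frontier_ball_subset_sphere.trans (sphere_zero_subset r))
    ((toFinite _).measure_zero _)

namespace UnitAddTorus

variable {d : Type*}

def linearFlow (α θ : d → ℝ) (τ : ℝ) : UnitAddTorus d :=
  fun k => ((τ * α k - θ k : ℝ) : UnitAddCircle)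

theorem continuous_linearFlow (α θ : d → ℝ) : Continuous (linearFlow α θ) :=
  continuous_pi fun _ => (AddCircle.continuous_mk' 1).comp (by fun_prop)

variable [Fintype d]

theorem integral_mFourier_of_ne_zero {n : d → ℤ} (hn : n ≠ 0) : ∫ x, mFourier n x = 0 := by
  obtain ⟨k, hk⟩ := Function.ne_iff.1 hn
  have hfactor : ∫ x : UnitAddCircle, fourier (n k) x = 0 :=
    integral_eq_zero_of_add_right_eq_neg (fourier_add_half_inv_index hk one_pos)
  exact (integral_fintype_prod_eq_prod (𝕜 := ℂ) fun i (x : UnitAddCircle) => fourier (n i) x).trans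
    (Finset.prod_eq_zero (Finset.mem_univ k) hfactor)

theorem mFourier_linearFlow (α θ : d → ℝ) (n : d → ℤ) (τ : ℝ) :
    mFourier n (linearFlow α θ τ) =
      cexp (↑(2 * π * ∑ k, n k * α k) * I * τ) * cexp (-2 * π * I * ∑ k, n k * θ k) := by
  simp only [mFourier, linearFlow, ContinuousMap.coe_mk, fourier_coe_apply, ← Complex.exp_sum,
    ← Complex.exp_add]
  congr 1
  push_cast
  simp only [Finset.mul_sum, ← Finset.sum_add_distrib, Finset.sum_mul]
  exact Finset.sum_congr rfl fun k _ => by ring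

theorem tendsto_average_mFourier_linearFlow {α : d → ℝ} (hα : LinearIndependent ℤ α)
    (θ : d → ℝ) (n : d → ℤ) :
    Tendsto (fun T : ℝ => T⁻¹ • ∫ τ in 0..T, mFourier n (linearFlow α θ τ)) atTop
      (𝓝 (∫ x, mFourier n x)) := by
  rcases eq_or_ne n 0 with rfl | hn
  · refine tendsto_const_nhds.congr' ?_
    filter_upwards [eventually_gt_atTop 0] with T hT
    simp [mFourier_zero, hT.ne']
  have hfreq : 2 * π * ∑ k, n k * α k ≠ 0 := by
    refine mul_ne_zero (by positivity) fun h => hn (funext fun k => ?_)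
    exact Fintype.linearIndependent_iff.1 hα n (by simpa [zsmul_eq_mul] using h) k
  simp_rw [integral_mFourier_of_ne_zero hn, mFourier_linearFlow,
    intervalIntegral.integral_mul_const, ← smul_mul_assoc]
  simpa using (tendsto_inv_smul_integral_cexp_mul_I hfreq).mul_const
    (cexp (-2 * π * I * ∑ k, n k * θ k))

theorem tendsto_occupationMeasure_linearFlow {α : d → ℝ} (hα : LinearIndependent ℤ α)
    (θ : d → ℝ) :
    Tendsto (occupationMeasure (continuous_linearFlow α θ).measurable) atTop
      (𝓝 ⟨volume, inferInstance⟩) := by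
  refine ProbabilityMeasure.tendsto_of_forall_integral_tendsto_of_dense_span
    span_mFourier_closure_eq_top ?_
  rintro _ ⟨n, rfl⟩
  simp_rw [integral_occupationMeasure _ _ (mFourier n).continuous.stronglyMeasurable]
  exact tendsto_comp_val_Ioi_atTop.2 (tendsto_average_mFourier_linearFlow hα θ n)

theorem volume_frontier_ball_zero {r : ℝ} (hr : 0 < r) :
    volume (frontier (ball (0 : UnitAddTorus d) r)) = 0 := by
  rw [ball_pi _ hr]
  refine measure_mono_null (frontier_univ_pi_subset _) (measure_iUnion_null fun k => ?_)
  exact Measure.pi_eval_preimage_null _ (UnitAddCircle.volume_frontier_ball_zero r)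

theorem preimage_linearFlow_ball_zero (α θ : d → ℝ) {ε : ℝ} (hε : 0 < ε) :
    linearFlow α θ ⁻¹' ball 0 ε = {τ | ∀ k, distNearestInt (τ * α k - θ k) < ε} := by
  ext τ
  simp only [ball_pi _ hε, mem_preimage, mem_univ_pi, linearFlow, Pi.zero_apply,
    mem_ball_zero_iff, UnitAddCircle.norm_eq, distNearestInt, mem_ofPred_eq]

end UnitAddTorus

/-- The Kronecker–Weyl approximation theorem: if `α₁, …, α_m` are linearly independent
over `ℚ`, then for any targets `θ₁, …, θ_m` and any `ε > 0`, the set of `τ ∈ [0,T]`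
with `‖τ αₖ - θₖ‖ < ε` for all `k` has a positive limiting density. -/
theorem kronecker_weyl (m : ℕ) (α : Fin m → ℝ) (hα : LinearIndependent ℚ α)
    (θ : Fin m → ℝ) (ε : ℝ) (hε : 0 < ε) :
    ∃ L : ℝ, 0 < L ∧
      Tendsto (fun T : ℝ =>
          (volume ({τ : ℝ | ∀ k : Fin m, distNearestInt (τ * α k - θ k) < ε} ∩
            Set.Icc 0 T)).toReal / T)
        atTop (nhds L) := by
  have hflow := UnitAddTorus.tendsto_occupationMeasure_linearFlow (hα.restrict_scalars' ℤ) θ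
  have hball := ProbabilityMeasure.tendsto_measure_of_null_frontier_of_tendsto' hflow
    (UnitAddTorus.volume_frontier_ball_zero hε)
  refine ⟨(volume (ball (0 : UnitAddTorus (Fin m)) ε)).toReal,
    ENNReal.toReal_pos (measure_ball_pos _ _ hε).ne' (measure_ne_top _ _), ?_⟩
  rw [← UnitAddTorus.preimage_linearFlow_ball_zero α θ hε, ← tendsto_comp_val_Ioi_atTop]
  exact ((ENNReal.tendsto_toReal (measure_ne_top volume _)).comp hball).congr fun T =>
    occupationMeasure_apply _ T measurableSet_ball
end

section
/- Functional independence from denseness: Let φ be holomorphic on D(1/2,1) and suppose for every s₀ ∈ D(1/2,1) the set {(φ(s₀+iτ), φ'(s₀+iτ), ..., φ^{(m−1)}(s₀+iτ)) : τ ∈ ℝ} is dense in ℂ^m. If f₀,...,f_n : ℂ^m → ℂ are continuous functions such that Σ_{l=0}^n s^l f_l(φ(s), φ'(s), ..., φ^{(m−1)}(s)) = 0 for all s ∈ D(1/2,1), then f_l ≡ 0 for all 0 ≤ l ≤ n. -/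
open Complex Polynomial Filter Topology Bornology Set

/-! Write `v(s) = (φ(s), φ'(s), …, φ^{(m-1)}(s))` and fix `z`. If `v` approaches `z` along
points of the strip tending to infinity, dividing the relation by `s^n` and passing to the limit
gives `f_n(z) = 0`. Otherwise density on a vertical line, together with compactness of its
bounded segments, yields an exact solution of `v(s) = z` on every vertical line of the strip;
then `Σ_l f_l(z) X^l` has infinitely many roots, so again `f_n(z) = 0`. Hence `f_n ≡ 0`, and
induction on `n` disposes of the remaining `f_l`. -/

theorem eq_zero_of_infinite_setOf_sum_pow_mul_eq_zero {R : Type*} [CommRing R] [IsDomain R]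
    {n : ℕ} {a : Fin n → R} (h : {s : R | ∑ l : Fin n, s ^ (l : ℕ) * a l = 0}.Infinite)
    (l : Fin n) : a l = 0 := by
  classical
  have hp : ofFn n a = 0 := by
    refine eq_zero_of_infinite_isRoot _ (h.mono fun s hs => ?_)
    simp_all [ofFn_eq_sum_monomial, eval_finsetSum, mul_comm]
  simpa [ofFn_coeff_eq_val_of_lt a l.isLt] using congr_arg (coeff · l) hp

theorem last_eq_zero_of_tendsto_of_sum_pow_mul_eq_zero {𝕜 : Type*} [NormedField 𝕜]
    {F : Filter 𝕜} [F.NeBot] (hF : F ≤ cobounded 𝕜) {n : ℕ} {c : Fin (n + 1) → 𝕜 → 𝕜}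
    {a : Fin (n + 1) → 𝕜} (hc : ∀ l, Tendsto (c l) F (𝓝 (a l)))
    (hrel : ∀ᶠ s in F, ∑ l : Fin (n + 1), s ^ (l : ℕ) * c l s = 0) :
    a (Fin.last n) = 0 := by
  -- the relation divided by `s ^ n`
  set g : 𝕜 → 𝕜 := fun s => c (Fin.last n) s + ∑ l : Fin n, s⁻¹ ^ (n - l) * c l.castSucc s
  have hg : Tendsto g F (𝓝 (a (Fin.last n))) := by
    have hinv : Tendsto Inv.inv F (𝓝 (0 : 𝕜)) := tendsto_inv₀_cobounded.mono_left hF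
    have hlim := (hc (Fin.last n)).add (tendsto_finsetSum Finset.univ
      fun (l : Fin n) _ => (hinv.pow (n - l)).mul (hc l.castSucc))
    rwa [Finset.sum_eq_zero fun l _ => by simp [zero_pow (Nat.sub_ne_zero_of_lt l.isLt)],
      add_zero] at hlim
  have hg0 : g =ᶠ[F] 0 := by
    filter_upwards [hrel, hF (isBounded_singleton (x := (0 : 𝕜)))] with s hs (hs0 : s ≠ 0)
    have hpow (l : Fin n) : s ^ n * s⁻¹ ^ (n - l) = s ^ (l : ℕ) := by
      rw [← pow_sub_mul_pow s l.is_lt.le, inv_pow, mul_comm (s ^ (n - l)), mul_assoc,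
        mul_inv_cancel₀ (pow_ne_zero _ hs0), mul_one]
    have : s ^ n * g s = 0 := by
      rw [← hs, Fin.sum_univ_castSucc, add_comm]
      simp only [g, mul_add, Finset.mul_sum, ← mul_assoc, hpow, Fin.val_castSucc, Fin.val_last]
    exact (mul_eq_zero.1 this).resolve_left (pow_ne_zero _ hs0)
  exact tendsto_nhds_unique hg (tendsto_const_nhds.congr' hg0.symm)

theorem eq_zero_of_sum_pow_mul_comp_eq_zero {𝕜 E : Type*} [NormedField 𝕜] [TopologicalSpace E]
    {U : Set 𝕜} {v : 𝕜 → E}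
    (hv : ∀ z, MapClusterPt z (cobounded 𝕜 ⊓ 𝓟 U) v ∨ (U ∩ v ⁻¹' {z}).Infinite)
    {n : ℕ} {f : Fin n → E → 𝕜} (hf : ∀ l, Continuous (f l))
    (hrel : ∀ s ∈ U, ∑ l : Fin n, s ^ (l : ℕ) * f l (v s) = 0) (l : Fin n) (z : E) :
    f l z = 0 := by
  induction n with
  | zero => exact l.elim0
  | succ n ih =>
    have hlast (z : E) : f (Fin.last n) z = 0 := by
      rcases hv z with hz | hz
      · set G := comap v (𝓝 z) ⊓ (cobounded 𝕜 ⊓ 𝓟 U)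
        have : G.NeBot := by
          rw [← map_neBot_iff v, Filter.push_pull']
          exact hz
        have hGU : G ≤ 𝓟 U := inf_le_right.trans inf_le_right
        exact last_eq_zero_of_tendsto_of_sum_pow_mul_eq_zero (F := G)
          (inf_le_right.trans inf_le_left)
          (fun l => (hf l).continuousAt.tendsto.comp (tendsto_comap.mono_left inf_le_left))
          (mem_of_superset (hGU (mem_principal_self U)) hrel)
      · refine eq_zero_of_infinite_setOf_sum_pow_mul_eq_zero (a := (f · z)) (hz.mono ?_) _
        rintro s ⟨hs, rfl⟩
        exact hrel s hs
    refine Fin.lastCases (hlast z) (fun l => ih (f := fun l => f l.castSucc) (fun l => hf _)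
      (fun s hs => ?_) l) l
    simpa [Fin.sum_univ_castSucc, hlast] using hrel s hs

theorem mem_range_or_mapClusterPt_cocompact {X E : Type*} [TopologicalSpace X]
    [TopologicalSpace E] [T2Space E] {g : X → E} (hg : Continuous g) {z : E}
    (hz : z ∈ closure (range g)) : z ∈ range g ∨ MapClusterPt z (cocompact X) g := by
  refine or_iff_not_imp_right.2 fun hcl => ?_
  obtain ⟨N, hN, hfar⟩ : ∃ N ∈ 𝓝 z, ∀ᶠ x in cocompact X, g x ∉ N := by
    simpa [mapClusterPt_iff_frequently, Filter.not_frequently] using hcl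
  obtain ⟨K, hK, hKN⟩ := mem_cocompact.1 hfar
  have : z ∈ closure (g '' K) := by
    rw [mem_closure_iff_nhds] at hz ⊢
    intro M hM
    obtain ⟨_, ⟨hyM, hyN⟩, x, rfl⟩ := hz (M ∩ N) (inter_mem hM hN)
    exact ⟨g x, hyM, x, not_not.1 fun hx => hKN hx hyN, rfl⟩
  obtain ⟨x, -, rfl⟩ := (hK.image hg).isClosed.closure_eq ▸ this
  exact mem_range_self x

theorem exists_eq_or_mapClusterPt_of_mem_closure_verticalLine {E : Type*} [TopologicalSpace E]
    [T2Space E] {U : Set ℂ} {v : ℂ → E} (hv : ContinuousOn v U) {σ : ℝ}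
    (hσ : ∀ τ : ℝ, (σ + τ * I : ℂ) ∈ U) {z : E}
    (hz : z ∈ closure (range fun τ : ℝ => v (σ + τ * I))) :
    (∃ τ : ℝ, v (σ + τ * I) = z) ∨ MapClusterPt z (cobounded ℂ ⊓ 𝓟 U) v := by
  have hline : Continuous fun τ : ℝ => (σ + τ * I : ℂ) := by fun_prop
  refine (mem_range_or_mapClusterPt_cocompact (hv.comp_continuous hline hσ) hz).imp id
    fun h => (mapClusterPt_comp.1 h).mono ?_
  refine tendsto_inf.2
    ⟨tendsto_norm_atTop_iff_cobounded.1 ?_, tendsto_principal.2 (.of_forall hσ)⟩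
  refine tendsto_atTop_mono (fun τ => ?_) tendsto_norm_cocompact_atTop
  simpa using abs_im_le_norm (σ + τ * I : ℂ)

/-- Functional independence from denseness: if for every `s₀` in the strip `D(1/2,1)`
the vectors of the first `m` derivatives of `φ` along the vertical line through `s₀`
are dense in `ℂ^m`, and continuous functions `f₀, …, f_n` satisfy
`Σ_l s^l f_l(φ(s), …, φ^{(m-1)}(s)) = 0` on the strip, then all `f_l` vanish
identically. -/
theorem functional_independence (m n : ℕ) (φ : ℂ → ℂ)
    (hφ : DifferentiableOn ℂ φ {s : ℂ | 1/2 < s.re ∧ s.re < 1})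
    (hdense : ∀ s₀ : ℂ, 1/2 < s₀.re → s₀.re < 1 →
      ∀ z : Fin m → ℂ, ∀ ε : ℝ, 0 < ε → ∃ τ : ℝ, ∀ k : Fin m,
        ‖iteratedDeriv (k : ℕ) φ (s₀ + τ * Complex.I) - z k‖ < ε)
    (f : Fin (n + 1) → (Fin m → ℂ) → ℂ) (hf : ∀ l, Continuous (f l))
    (hrel : ∀ s : ℂ, 1/2 < s.re → s.re < 1 →
      ∑ l : Fin (n + 1), s ^ (l : ℕ) *
        f l (fun k : Fin m => iteratedDeriv (k : ℕ) φ s) = 0) :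
    ∀ l : Fin (n + 1), ∀ z : Fin m → ℂ, f l z = 0 := by
  set U : Set ℂ := {s | 1/2 < s.re ∧ s.re < 1}
  set v : ℂ → Fin m → ℂ := fun s k => iteratedDeriv k φ s
  have hU : IsOpen U :=
    (isOpen_lt continuous_const continuous_re).inter (isOpen_lt continuous_re continuous_const)
  have hv : ContinuousOn v U := continuousOn_pi.2 fun k => by
    simpa only [v, iteratedDeriv_eq_iterate] using
      ((hφ.analyticOnNhd hU).iterated_deriv k).continuousOn
  refine eq_zero_of_sum_pow_mul_comp_eq_zero (U := U) (v := v)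
    (fun z => or_iff_not_imp_left.2 fun hz => ?_) hf fun s hs => hrel s hs.1 hs.2
  have hhit (σ : ℝ) (hσ : σ ∈ Ioo (1/2) 1) : ∃ τ : ℝ, v (σ + τ * I) = z := by
    have hline (τ : ℝ) : (σ + τ * I : ℂ) ∈ U := by simpa [U] using hσ
    refine (exists_eq_or_mapClusterPt_of_mem_closure_verticalLine hv hline
      (Metric.mem_closure_range_iff.2 fun ε hε => ?_)).resolve_right hz
    obtain ⟨τ, hτ⟩ := hdense σ (by simpa using hσ.1) (by simpa using hσ.2) z ε hε
    exact ⟨τ, (dist_pi_lt_iff hε).2 fun k => by simpa [dist_eq_norm, norm_sub_rev] using hτ k⟩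
  refine ((Ioo_infinite (by norm_num : (1/2 : ℝ) < 1)).mono fun σ hσ => ?_).of_image re
  obtain ⟨τ, hτ⟩ := hhit σ hσ
  exact ⟨σ + τ * I, ⟨by simpa [U] using hσ, hτ⟩, by simp⟩
end
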